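/- Let $S_1, \dots, S_{n+1}$ be exchangeable real-valued random variables and let $\hat{q}$ be the $\lceil (n+1)\gamma \rceil$-th smallest value among $S_1, \dots, S_n$ (with $\hat{q} = \infty$ if $\lceil (n+1)\gamma \rceil > n$), where $\gamma \in (0,1)$. Then $\mathbb{P}(S_{n+1} \leq \hat{q}) \geq \gamma$. -/

import Mathlib

/-!
Let `k = ⌈(n+1)γ⌉` and call the rank of a score the number of scores strictly below it. For the
last score, `S (n+1) ≤ q̂` says exactly that its rank is `< k`. Pointwise, at least `k` of the
`n+1` scores have rank `< k` (the `k` smallest ones; counting only strictly smaller scores makes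
ties harmless), and by exchangeability all these `n+1` events have the same probability. Hence each
has probability at least `k / (n+1) ≥ γ`.
-/

open MeasureTheory Finset
open scoped ENNReal

section Rank

variable {ι : Type*} [Fintype ι]

/-- The `k`-th smallest value of `f`, with `orderStat f k = ⊤` when `k > card ι`. -/
noncomputable def orderStat (f : ι → ℝ) (k : ℕ) : EReal :=
  sInf {x : EReal | k ≤ #{i | (f i : EReal) ≤ x}}

noncomputable def rankLt (v : ι → ℝ) (j : ι) : ℕ :=
  #{i | v i < v j}

theorem coe_le_orderStat_iff (f : ι → ℝ) (k : ℕ) (t : ℝ) :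
    (t : EReal) ≤ orderStat f k ↔ #{i | f i < t} < k := by
  rw [orderStat, le_sInf_iff]
  constructor
  · intro h
    by_contra! hk
    set m : EReal := ({i | f i < t} : Finset ι).sup fun i => (f i : EReal)
    have hmt : m < t := (Finset.sup_lt_iff (EReal.bot_lt_coe t)).2 fun i hi =>
      EReal.coe_lt_coe_iff.2 (mem_filter.1 hi).2
    have hkm : k ≤ #{i | (f i : EReal) ≤ m} :=
      hk.trans (card_le_card fun i hi =>
        mem_filter.2 ⟨mem_univ i, le_sup (f := fun i => (f i : EReal)) hi⟩)
    exact (h m hkm).not_gt hmt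
  · intro h x hx
    by_contra! hxt
    refine (hx.trans (card_le_card fun i hi => ?_)).not_gt h
    exact mem_filter.2 ⟨mem_univ i, EReal.coe_lt_coe_iff.1 ((mem_filter.1 hi).2.trans_lt hxt)⟩

theorem rankLt_comp_perm (v : ι → ℝ) (σ : Equiv.Perm ι) (j : ι) :
    rankLt (v ∘ σ) j = rankLt v (σ j) :=
  card_equiv σ (by simp)

theorem measurable_rankLt (j : ι) : Measurable fun v : ι → ℝ => rankLt v j := by
  simp_rw [rankLt, card_filter]
  exact measurable_sum _ fun i _ => Measurable.ite
    (measurableSet_lt (measurable_pi_apply i) (measurable_pi_apply j)) measurable_const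
    measurable_const

/-- If fewer than `k` indices had rank below `k`, an index of minimal value among the others
would have all strictly smaller values among those fewer than `k` indices. -/
theorem le_card_filter_rankLt_lt (v : ι → ℝ) {k : ℕ} (hk : k ≤ Fintype.card ι) :
    k ≤ #{j | rankLt v j < k} := by
  classical
  by_contra! hlt
  set L : Finset ι := {j | rankLt v j < k}
  have hne : Lᶜ.Nonempty := by rw [← card_pos, card_compl]; omega
  obtain ⟨j, hj, hmin⟩ := Lᶜ.exists_min_image v hne
  have hsub : ({i | v i < v j} : Finset ι) ⊆ L := fun i hi => by
    by_contra hiL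
    exact (hmin i (mem_compl.2 hiL)).not_gt (mem_filter.1 hi).2
  exact mem_compl.1 hj (mem_filter.2 ⟨mem_univ j, (card_le_card hsub).trans_lt hlt⟩)

theorem rankLt_last {n : ℕ} (v : Fin (n + 1) → ℝ) :
    rankLt v (Fin.last n) = #{i : Fin n | v i.castSucc < v (Fin.last n)} := by
  simp only [rankLt, card_filter, Fin.sum_univ_castSucc, lt_irrefl, if_false, add_zero]

end Rank

section Exchangeable

variable {ι Ω : Type*} [Fintype ι] [MeasurableSpace Ω] {μ : Measure Ω}

def Exchangeable (μ : Measure Ω) (X : Ω → ι → ℝ) : Prop :=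
  ∀ σ : Equiv.Perm ι, μ.map (fun ω i => X ω (σ i)) = μ.map X

theorem Exchangeable.measure_rankLt_lt_eq {X : Ω → ι → ℝ} (hX : Exchangeable μ X)
    (hXm : Measurable X) (k : ℕ) (j j' : ι) :
    μ {ω | rankLt (X ω) j < k} = μ {ω | rankLt (X ω) j' < k} := by
  classical
  have hB : MeasurableSet {v : ι → ℝ | rankLt v j' < k} := measurable_rankLt j' measurableSet_Iio
  have hXσ : Measurable fun ω i => X ω (Equiv.swap j j' i) := by fun_prop
  calc μ {ω | rankLt (X ω) j < k}
      = μ.map (fun ω i => X ω (Equiv.swap j j' i)) {v | rankLt v j' < k} := by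
        rw [Measure.map_apply hXσ hB]
        congr with ω
        simp [← Function.comp_def, rankLt_comp_perm]
    _ = μ {ω | rankLt (X ω) j' < k} := by
        rw [hX, Measure.map_apply hXm hB]
        rfl

theorem Exchangeable.natCast_le_card_mul_measure_rankLt_lt [IsProbabilityMeasure μ]
    {X : Ω → ι → ℝ} (hX : Exchangeable μ X) (hXm : Measurable X) {k : ℕ}
    (hk : k ≤ Fintype.card ι) (j : ι) :
    (k : ℝ≥0∞) ≤ Fintype.card ι * μ {ω | rankLt (X ω) j < k} := by
  have hA : ∀ j, MeasurableSet {ω | rankLt (X ω) j < k} := fun j =>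
    (measurable_rankLt j).comp hXm measurableSet_Iio
  calc (k : ℝ≥0∞) = ∫⁻ _, (k : ℝ≥0∞) ∂μ := by simp
    _ ≤ ∫⁻ ω, ∑ j', {ω | rankLt (X ω) j' < k}.indicator 1 ω ∂μ := lintegral_mono fun ω => by
        simp only [Set.indicator_apply, Set.mem_ofPred_eq, Pi.one_apply, sum_boole]
        exact_mod_cast le_card_filter_rankLt_lt (X ω) hk
    _ = ∑ j', μ {ω | rankLt (X ω) j' < k} := by
        rw [lintegral_finsetSum _ fun j' _ => measurable_one.indicator (hA j')]
        simp [lintegral_indicator_one (hA _)]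
    _ = Fintype.card ι * μ {ω | rankLt (X ω) j < k} := by
        simp [hX.measure_rankLt_lt_eq hXm k _ j]

end Exchangeable

/-- Split conformal prediction coverage guarantee: for exchangeable scores
`S 1, …, S (n+1)`, letting `q̂` be the `⌈(n+1)γ⌉`-th smallest of the first `n` scores
(`q̂ = ∞` if `⌈(n+1)γ⌉ > n`, via `inf ∅ = ⊤` in `EReal`), we have `P(S (n+1) ≤ q̂) ≥ γ`. -/
theorem stmt_8 {Ω : Type*} [MeasurableSpace Ω] (μ : Measure Ω) [IsProbabilityMeasure μ]
    (n : ℕ) (S : Fin (n + 1) → Ω → ℝ) (hSmeas : ∀ i, Measurable (S i))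
    (hexch : ∀ σ : Equiv.Perm (Fin (n + 1)),
      Measure.map (fun ω => fun i => S (σ i) ω) μ = Measure.map (fun ω => fun i => S i ω) μ)
    (γ : ℝ) (hγ : γ ∈ Set.Ioo (0 : ℝ) 1)
    (qhat : Ω → EReal)
    (hqhat : ∀ ω, qhat ω = sInf {x : EReal |
      ⌈((n : ℝ) + 1) * γ⌉₊ ≤
        (Finset.univ.filter (fun i : Fin n => (S i.castSucc ω : EReal) ≤ x)).card}) :
    ENNReal.ofReal γ ≤ μ {ω | (S (Fin.last n) ω : EReal) ≤ qhat ω} := by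
  set k := ⌈((n : ℝ) + 1) * γ⌉₊
  have hkn : k ≤ n + 1 := Nat.ceil_le.2 (by push_cast; nlinarith [hγ.2])
  have hevent : {ω | (S (Fin.last n) ω : EReal) ≤ qhat ω}
      = {ω | rankLt (fun i => S i ω) (Fin.last n) < k} := by
    ext ω
    rw [Set.mem_ofPred_eq, Set.mem_ofPred_eq, hqhat ω, ← orderStat, coe_le_orderStat_iff,
      rankLt_last]
  have hcov : (k : ℝ≥0∞) ≤ (n + 1) * μ {ω | rankLt (fun i => S i ω) (Fin.last n) < k} := by
    simpa using Exchangeable.natCast_le_card_mul_measure_rankLt_lt (X := fun ω i => S i ω)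
      hexch (measurable_pi_lambda _ hSmeas) (by simpa using hkn) (Fin.last n)
  have hγk : γ ≤ k / ((n : ℝ) + 1) := by
    rw [le_div_iff₀ (by positivity), mul_comm]
    exact Nat.le_ceil _
  rw [hevent]
  calc ENNReal.ofReal γ ≤ ENNReal.ofReal (k / ((n : ℝ) + 1)) := ENNReal.ofReal_le_ofReal hγk
    _ = k / (n + 1) := by
        rw [ENNReal.ofReal_div_of_pos (by positivity)]
        norm_cast
    _ ≤ _ := ENNReal.div_le_of_le_mul' hcov
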